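/- Let P be a polynomial in two variables with real coefficients satisfying the reduced photon factorization constraint. Then P = 0. -/

import Mathlib

/-- Evaluation of a two-variable real polynomial at `(x, y)`. -/
noncomputable def ev (P : MvPolynomial (Fin 2) ℝ) (x y : ℝ) : ℝ :=
  MvPolynomial.eval ![x, y] P

/-- The reduced photon factorization constraint for a two-variable polynomial `P`. -/
def PhotonConstraint (P : MvPolynomial (Fin 2) ℝ) : Prop :=
  ∀ E1 E2 E3 E4 : ℝ, E1 + E2 + E3 + E4 = 0 →
    (E1 - E3) * (E2 - E4) * ev P (E1 + E3) (E1 * E3) * ev P (E2 + E4) (E2 * E4)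
    + (E1 + 2 * E2) * (2 * E3 + E4) * ev P (-E1) (-E2 * (E1 + E2)) *
        ev P (-E4) (-E3 * (E3 + E4))
    - (E1 + 2 * E4) * (E2 + 2 * E3) * ev P (-E1) (-E4 * (E1 + E4)) *
        ev P (-E2) (-E3 * (E2 + E3)) = 0

/-!
Put `q x = P(x, 0)` and `S(s, p) = P(s, p) P(-s, p)`. The main tool is that a real polynomial
vanishing on a product of two infinite sets is zero; in particular `P` is determined by its values
at the points `(a + b, ab)`, which fill the region `s² ≥ 4p`.

At `E = (a, -2a, a, 0)` the constraint reads `a² P(-a, -2a²) P(0, -a²) = 0`, so `P(0, 0) = 0`.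
At `E₃ = 0` it factors as `(a + 2b) P(-a, -b(a + b)) (a q(a) - (a + b) q(a + b) + b q(-b))`.
Since `ℝ[a, b]` is a domain, either `P(-a, -b(a + b)) ≡ 0`, which already gives `P = 0`, or the
last factor vanishes identically; then `q` is even and `q(2x) = q(x)`, so `q` is constant, equal
to `P(0, 0) = 0`. Now at `E = (x, -x, w, -w)` the constraint becomes
`(x - w)² S(x + w, xw) = (x - 2w)² S(x, w(x - w))`, which forces `S` to vanish on the parabolas
`p = (n + 1) s² / (n + 2)²` one after the other, hence `S = 0`, hence `P = 0`.
-/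

open MvPolynomial

theorem AlgHom.apply_aeval_eq_ev {A : Type*} [CommSemiring A] [Algebra ℝ A] (φ : A →ₐ[ℝ] ℝ)
    (P : MvPolynomial (Fin 2) ℝ) (u v : A) : φ (aeval ![u, v] P) = ev P (φ u) (φ v) := by
  rw [comp_aeval_apply, ev, ← aeval_eq_eval]
  congr 2
  ext i
  fin_cases i <;> rfl

theorem ev_aeval (P u v : MvPolynomial (Fin 2) ℝ) (x y : ℝ) :
    ev (aeval ![u, v] P) x y = ev P (ev u x y) (ev v x y) :=
  (aeval ![x, y]).apply_aeval_eq_ev P u v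

theorem ev_add (P Q : MvPolynomial (Fin 2) ℝ) (x y : ℝ) : ev (P + Q) x y = ev P x y + ev Q x y :=
  map_add _ _ _

theorem ev_sub (P Q : MvPolynomial (Fin 2) ℝ) (x y : ℝ) : ev (P - Q) x y = ev P x y - ev Q x y :=
  map_sub _ _ _

theorem ev_mul (P Q : MvPolynomial (Fin 2) ℝ) (x y : ℝ) : ev (P * Q) x y = ev P x y * ev Q x y :=
  map_mul _ _ _

theorem eq_zero_of_ev_eq_zero_on_prod {P : MvPolynomial (Fin 2) ℝ} {A B : Set ℝ}
    (hA : A.Infinite) (hB : B.Infinite) (h : ∀ x ∈ A, ∀ y ∈ B, ev P x y = 0) : P = 0 := by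
  refine funext_set ![A, B] (fun i => by fin_cases i <;> assumption) fun z hz => ?_
  have hz' : ![z 0, z 1] = z := by ext i; fin_cases i <;> rfl
  rw [map_zero, ← hz']
  exact h _ (hz 0 trivial) _ (hz 1 trivial)

theorem eq_zero_of_forall_ev_eq_zero {P : MvPolynomial (Fin 2) ℝ} (h : ∀ x y, ev P x y = 0) :
    P = 0 :=
  eq_zero_of_ev_eq_zero_on_prod Set.infinite_univ Set.infinite_univ fun x _ y _ => h x y

theorem eq_zero_of_ev_add_mul_eq_zero {P : MvPolynomial (Fin 2) ℝ}
    (h : ∀ a b, ev P (a + b) (a * b) = 0) : P = 0 := by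
  refine eq_zero_of_ev_eq_zero_on_prod Set.infinite_univ (Set.Iio_infinite 0) fun s _ p hp => ?_
  -- `a, b` are the roots of `t² - s t + p`, real because `p < 0`
  have hd : (√(s ^ 2 - 4 * p)) ^ 2 = s ^ 2 - 4 * p :=
    Real.sq_sqrt (by nlinarith [sq_nonneg s, Set.mem_Iio.mp hp])
  convert h ((s + √(s ^ 2 - 4 * p)) / 2) ((s - √(s ^ 2 - 4 * p)) / 2) using 2
  · ring
  · linear_combination (1 / 4 : ℝ) * hd

theorem eq_zero_of_sq_sub_mul_ev_eq {S : MvPolynomial (Fin 2) ℝ}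
    (h : ∀ x w : ℝ, (x - w) ^ 2 * ev S (x + w) (x * w) =
      (x - 2 * w) ^ 2 * ev S x (w * (x - w))) : S = 0 := by
  -- the relation propagates vanishing of `S` from the parabola `p = (n + 1) s² / (n + 2)²`
  -- to the next one
  have hpar : ∀ n : ℕ, ∀ l : ℝ, (n * l) ^ 2 * ev S ((n + 2) * l) ((n + 1) * l ^ 2) = 0 := by
    intro n l
    induction n with
    | zero => simp
    | succ n ih =>
      calc ((n + 1 : ℕ) * l) ^ 2 * ev S (((n + 1 : ℕ) + 2) * l) (((n + 1 : ℕ) + 1) * l ^ 2)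
          = (n * l) ^ 2 * ev S ((n + 2) * l) ((n + 1) * l ^ 2) := by
            push_cast
            convert h ((n + 2) * l) l using 3 <;> ring
        _ = 0 := ih
  set U : MvPolynomial (Fin 2) ℝ := aeval ![(X 0 + 1) * X 1, X 0 * X 1 ^ 2] S
  have hUev : ∀ m l, ev U m l = ev S ((m + 1) * l) (m * l ^ 2) := fun m l => by
    simp only [U, ev_aeval]
    simp [ev]
  have hU : U = 0 := by
    refine eq_zero_of_ev_eq_zero_on_prod (A := Set.range fun n : ℕ => (n + 2 : ℝ))
      (B := {0}ᶜ) ?_ (Set.finite_singleton 0).infinite_compl ?_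
    · exact Set.infinite_range_of_injective fun m n hmn => by simpa using hmn
    · rintro _ ⟨n, rfl⟩ l hl
      have := hpar (n + 1) l
      rw [hUev]
      push_cast at this
      have hl' : ((n + 1 : ℝ) * l) ^ 2 ≠ 0 := pow_ne_zero _ (mul_ne_zero (by positivity) hl)
      convert (mul_eq_zero.mp this).resolve_left hl' using 2 <;> ring
  have hS : ∀ m l, ev S ((m + 1) * l) (m * l ^ 2) = 0 := fun m l => by
    rw [← hUev, hU]; simp [ev]
  apply eq_zero_of_ev_add_mul_eq_zero
  intro a b
  rcases eq_or_ne b 0 with rfl | hb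
  · simpa using hS 0 a
  · convert hS (a / b) b using 2 <;> field_simp

theorem Polynomial.eval_eq_eval_zero_of_cocycle {q : Polynomial ℝ}
    (h : ∀ a b, a * q.eval a - (a + b) * q.eval (a + b) + b * q.eval (-b) = 0) (x : ℝ) :
    q.eval x = q.eval 0 := by
  have hdouble : ∀ a, q.eval (2 * a) = q.eval a := by
    intro a
    rcases eq_or_ne a 0 with rfl | ha
    · simp
    have heven := h 0 a
    have hsum := h a a
    rw [zero_add] at heven
    rw [← two_mul] at hsum
    have : 2 * a * (q.eval a - q.eval (2 * a)) = 0 := by linear_combination hsum - heven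
    linarith [(mul_eq_zero.mp this).resolve_left (mul_ne_zero two_ne_zero ha)]
  rcases eq_or_ne x 0 with rfl | hx
  · rfl
  have hpow (n : ℕ) : q.eval (2 ^ n * x) = q.eval x := by
    induction n with
    | zero => simp
    | succ n ih => rwa [pow_succ', mul_assoc, hdouble]
  have hq : q = Polynomial.C (q.eval x) := by
    apply Polynomial.eq_of_infinite_eval_eq
    refine Set.Infinite.mono (s := Set.range fun n : ℕ => 2 ^ n * x) ?_ ?_
    · rintro _ ⟨n, rfl⟩
      simp [hpow]
    · exact Set.infinite_range_of_injective fun m n hmn => by simpa [hx] using hmn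
  rw [hq]
  simp

section

variable {P : MvPolynomial (Fin 2) ℝ}

theorem PhotonConstraint.sq_mul_ev_mul_ev_eq_zero (h : PhotonConstraint P) (a : ℝ) :
    a ^ 2 * (ev P (-a) (-(2 * a ^ 2)) * ev P 0 (-a ^ 2)) = 0 := by
  have := h a (-2 * a) a 0 (by ring)
  rw [neg_zero, show -(-2 * a) * (a + -2 * a) = -(2 * a ^ 2) by ring,
    show -a * (a + 0) = -a ^ 2 by ring] at this
  linear_combination (-1 / 6 : ℝ) * this

theorem PhotonConstraint.ev_zero_zero (h : PhotonConstraint P) : ev P 0 0 = 0 := by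
  set G : MvPolynomial (Fin 2) ℝ := aeval ![-X 0, -(2 * X 0 ^ 2)] P * aeval ![0, -X 0 ^ 2] P
  have hG : ∀ a b, ev G a b = ev P (-a) (-(2 * a ^ 2)) * ev P 0 (-a ^ 2) := fun a b => by
    simp only [G, ev_mul, ev_aeval]
    simp [ev]
  have hG0 : G = 0 := by
    refine eq_zero_of_ev_eq_zero_on_prod (Set.finite_singleton 0).infinite_compl
      Set.infinite_univ fun a ha b _ => ?_
    rw [hG]
    exact (mul_eq_zero.mp (h.sq_mul_ev_mul_ev_eq_zero a)).resolve_left (pow_ne_zero 2 ha)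
  simpa [hG0, ev] using hG 0 0

theorem PhotonConstraint.mul_ev_mul_cocycle_eq_zero (h : PhotonConstraint P) (a b : ℝ) :
    (a + 2 * b) * ev P (-a) (-(b * (a + b))) *
      (a * ev P a 0 - (a + b) * ev P (a + b) 0 + b * ev P (-b) 0) = 0 := by
  have := h a b 0 (-(a + b)) (by ring)
  rw [show b + -(a + b) = -a by ring, show b * -(a + b) = -(b * (a + b)) by ring,
    show -b * (a + b) = -(b * (a + b)) by ring,
    show - -(a + b) * (a + -(a + b)) = -(b * (a + b)) by ring,
    show -0 * (0 + -(a + b)) = 0 by ring, show -0 * (b + 0) = 0 by ring, neg_neg, add_zero,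
    mul_zero] at this
  linear_combination this

theorem PhotonConstraint.eq_zero_or_cocycle (h : PhotonConstraint P) :
    P = 0 ∨ ∀ a b, a * ev P a 0 - (a + b) * ev P (a + b) 0 + b * ev P (-b) 0 = 0 := by
  set F : MvPolynomial (Fin 2) ℝ := aeval ![-X 0, -(X 1 * (X 0 + X 1))] P
  set B : MvPolynomial (Fin 2) ℝ :=
    X 0 * aeval ![X 0, 0] P - (X 0 + X 1) * aeval ![X 0 + X 1, 0] P + X 1 * aeval ![-X 1, 0] P
  have hF : ∀ a b, ev F a b = ev P (-a) (-(b * (a + b))) := fun a b => by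
    simp only [F, ev_aeval]
    simp [ev]
  have hB : ∀ a b, ev B a b = a * ev P a 0 - (a + b) * ev P (a + b) 0 + b * ev P (-b) 0 :=
    fun a b => by
      simp only [B, ev_add, ev_sub, ev_mul, ev_aeval]
      simp [ev]
  have hFB : ((X 0 + 2 * X 1) * F) * B = 0 := eq_zero_of_forall_ev_eq_zero fun a b => by
    rw [ev_mul, ev_mul, hF, hB]
    simpa [ev] using h.mul_ev_mul_cocycle_eq_zero a b
  rcases mul_eq_zero.mp hFB with hlinF | hB0
  · rcases mul_eq_zero.mp hlinF with hlin | hF0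
    · simpa [ev] using congrArg (ev · 0 1) hlin
    · left
      refine eq_zero_of_ev_add_mul_eq_zero fun a b => ?_
      simpa [hF0, ev] using (hF (-(a + b)) a).symm
  · right
    intro a b
    simpa [hB0, ev] using (hB a b).symm

theorem PhotonConstraint.ev_zero_right (h : PhotonConstraint P) (x : ℝ) : ev P x 0 = 0 := by
  rcases h.eq_zero_or_cocycle with rfl | hcocycle
  · simp [ev]
  set q : Polynomial ℝ := aeval ![Polynomial.X, 0] P
  have hq : ∀ t, q.eval t = ev P t 0 := fun t => by
    simpa using (Polynomial.aeval t).apply_aeval_eq_ev P Polynomial.X 0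
  rw [← hq, q.eval_eq_eval_zero_of_cocycle (by simpa only [hq] using hcocycle), hq,
    h.ev_zero_zero]

theorem PhotonConstraint.sq_sub_mul_ev_eq (h : PhotonConstraint P) (x w : ℝ) :
    (x - w) ^ 2 * (ev P (x + w) (x * w) * ev P (-(x + w)) (x * w)) =
      (x - 2 * w) ^ 2 * (ev P x (w * (x - w)) * ev P (-x) (w * (x - w))) := by
  have := h x (-x) w (-w) (by ring)
  rw [show -x + -w = -(x + w) by ring, show -x * -w = x * w by ring,
    show - -w * (x + -w) = w * (x - w) by ring, show -w * (-x + w) = w * (x - w) by ring,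
    neg_neg, show -w * (w + -w) = 0 by ring, h.ev_zero_right] at this
  linear_combination -this

end

theorem stmt_7 (P : MvPolynomial (Fin 2) ℝ) (h : PhotonConstraint P) :
    P = 0 := by
  have hS : P * aeval ![-X 0, X 1] P = 0 := eq_zero_of_sq_sub_mul_ev_eq fun x w => by
    simp only [ev_mul, ev_aeval]
    simpa [ev] using h.sq_sub_mul_ev_eq x w
  refine (mul_eq_zero.mp hS).elim id fun hP => eq_zero_of_forall_ev_eq_zero fun x y => ?_
  have := congrArg (ev · (-x) y) hP
  simp only [ev_aeval] at this
  simpa [ev] using this
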